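/- arXiv:1506.02195 — 2 statements merged into one kernel-verified Lean document; each statement's English description precedes it below -/
import Mathlib

section
/- (Lemma 3.1) As ρ → ∞, Δ(ρ) = Σ_{ξ=1}^m ρ^{μ₁+2τ_ξ}(a^∞_ξ + O(ρ^{−1})), where a^∞_ξ = Σ_{s∈I_ξ} σ_{s2} b^∞_{s2} ∏_{j≠s} σ_j b^∞_{j1} and μ₁ := Σ_{j=1}^p μ_{j1}; and as ρ → 0, Δ(ρ) = ρ^{μ₁}(d⁰ + o(1)) with d⁰ = Σ_{s=1}^p (σ_{s1} b⁰_{s1} + σ_{s2} b⁰_{s2}) ∏_{j≠s} σ_j b⁰_{j1}. Moreover the coefficients a^∞_ξ depend only on the numbers ν_k and the coefficients σ_k, σ_{k1}, σ_{k2}, and not on the potentials q_k. -/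
/-!
Divide the `s`-th summand of `Δ` by `ρ^(μ₁ + 2ν_s)`: it becomes
`(σ_{s1} b_{s1} + σ_{s2} b_{s2}) / ρ^(μ_{s2}) · ∏_{j ≠ s} σ_j b_{j1} / ρ^(μ_{j1})`, a polynomial in
the normalized Stokes multipliers `b_{j1}/ρ^(μ_{j1})`, `b_{s2}/ρ^(μ_{s2})`, each of which tends to
its Lemma 2.1 constant at rate `O(ρ⁻¹)`; the remaining term `σ_{s1} b_{s1}/ρ^(μ_{s2})` carries the
factor `ρ^(-2ν_s) = O(ρ⁻¹)` since `Re ν_s > 1/2`. Grouping the rays by `ν_s = τ_ξ` gives the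
expansion at infinity. As `ρ → 0` every `b_{sj}` is of order `ρ^(μ_{s1})`, so `Δ/ρ^(μ₁)` is again a
polynomial in convergent quantities, with limit `d⁰`. Finally `a^∞_ξ` only involves `σ_j`,
`σ_{j2}` and `b^∞ = B(ν)`.
-/

open Filter Complex Topology MeasureTheory Asymptotics Matrix

noncomputable section

/-- `y` solves the equation `-y'' + (ν₀/x² + q x) y = λ y` on `(0,∞)`. -/
def SolvesEq (ν₀ : ℂ) (q : ℝ → ℂ) (lam : ℂ) (y : ℝ → ℂ) : Prop :=
  ∀ x : ℝ, 0 < x → - deriv (deriv y) x + (ν₀ / (x : ℂ) ^ 2 + q x) * y x = lam * y x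

/-- The Jost normalization: `y^{(ξ)}(x) = e^{iρx}((iρ)^ξ + o(1))` as `x → ∞`, `ξ = 0,1`. -/
def JostAt (ρ : ℂ) (y : ℝ → ℂ) : Prop :=
  Tendsto (fun x : ℝ => y x * Complex.exp (-(Complex.I * ρ * x))) atTop (𝓝 1) ∧
  Tendsto (fun x : ℝ => deriv y x * Complex.exp (-(Complex.I * ρ * x))) atTop
    (𝓝 (Complex.I * ρ))

/-- The Wronskian `⟨y,z⟩ = y z' - y' z` at the point `x`. -/
def Wr (y z : ℝ → ℂ) (x : ℝ) : ℂ := y x * deriv z x - deriv y x * z x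

/-- Condition (2.2): `∫₀¹ |x^{1−2ν} q(x)| dx + ∫₁^∞ |x q(x)| dx < ∞`. -/
def Cond22 (ν : ℂ) (q : ℝ → ℂ) : Prop :=
  MeasureTheory.IntegrableOn (fun x : ℝ => x ^ (1 - 2 * ν.re) * ‖q x‖) (Set.Ioc 0 1) ∧
  MeasureTheory.IntegrableOn (fun x : ℝ => x * ‖q x‖) (Set.Ioi 1)

/-- The filter `ρ → ∞` within the closed upper half-plane. -/
def atInfUHP : Filter ℂ := Bornology.cobounded ℂ ⊓ Filter.principal {ρ : ℂ | 0 ≤ ρ.im}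

/-- The filter `ρ → 0` within the closed upper half-plane (excluding `0`). -/
def nhdsZeroUHP : Filter ℂ := nhdsWithin 0 {ρ : ℂ | 0 ≤ ρ.im ∧ ρ ≠ 0}

/-- The star-graph problem `L` of the paper: `p` rays, on ray `R_j` the equation
`−y'' + (ν_{j0}/x² + q_j(x))y = ρ²y` with `ν_{j0} = ν_j² − 1/4`, `Re ν_j > 1/2`,
`ν_j ∉ ℕ`, Condition ν, potentials satisfying (2.2), matching coefficients
`σ_j ≠ 0`, `σ_{j2} ≠ 0`, the solutions `S_{j1}, S_{j2}` (with unit Wronskian), the Jost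
solutions `f_j`, and the Stokes multipliers `b_{j1}, b_{j2}` together with their
Lemma 2.1 asymptotic constants `b^∞_{j1}, b^∞_{j2} ≠ 0` and `b⁰_{j1}, b⁰_{j2}`. -/
structure GraphProblem (p : ℕ) where
  ν : Fin p → ℂ
  σ : Fin p → ℂ
  σ1 : Fin p → ℂ
  σ2 : Fin p → ℂ
  q : Fin p → ℝ → ℂ
  S1 : Fin p → ℝ → ℂ → ℂ
  S2 : Fin p → ℝ → ℂ → ℂ
  f : Fin p → ℝ → ℂ → ℂ
  b1 : Fin p → ℂ → ℂ
  b2 : Fin p → ℂ → ℂ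
  b1inf : Fin p → ℂ
  b2inf : Fin p → ℂ
  b10 : Fin p → ℂ
  b20 : Fin p → ℂ
  hν : ∀ j, 1 / 2 < (ν j).re
  hνnat : ∀ j (n : ℕ), ν j ≠ (n : ℂ)
  hνcond : ∀ j l, ν j ≠ ν l → (ν j).re ≠ (ν l).re
  hσ : ∀ j, σ j ≠ 0
  hσ2 : ∀ j, σ2 j ≠ 0
  hq : ∀ j, Cond22 (ν j) (q j)
  hS1 : ∀ j lam, SolvesEq ((ν j) ^ 2 - 1 / 4) (q j) lam (fun x => S1 j x lam)
  hS2 : ∀ j lam, SolvesEq ((ν j) ^ 2 - 1 / 4) (q j) lam (fun x => S2 j x lam)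
  hWrS : ∀ j lam (x : ℝ), 0 < x →
    Wr (fun t => S1 j t lam) (fun t => S2 j t lam) x = 1
  hf : ∀ j (ρ : ℂ), ρ ≠ 0 → 0 ≤ ρ.im →
    SolvesEq ((ν j) ^ 2 - 1 / 4) (q j) (ρ ^ 2) (fun x => f j x ρ) ∧
      JostAt ρ (fun x => f j x ρ)
  hfan : ∀ j (x : ℝ), 0 < x → DifferentiableOn ℂ (fun ρ => f j x ρ) {ρ : ℂ | 0 < ρ.im}
  hb : ∀ j (ρ : ℂ), ρ ≠ 0 → 0 ≤ ρ.im → ∀ x : ℝ, 0 < x →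
    f j x ρ = b1 j ρ * S1 j x (ρ ^ 2) + b2 j ρ * S2 j x (ρ ^ 2)
  hb1inf : ∀ j, (fun ρ : ℂ => b1 j ρ - ρ ^ ((1 : ℂ) / 2 - ν j) * b1inf j)
      =O[atInfUHP] fun ρ : ℂ => ρ ^ ((1 : ℂ) / 2 - ν j) / ρ
  hb2inf : ∀ j, (fun ρ : ℂ => b2 j ρ - ρ ^ ((1 : ℂ) / 2 + ν j) * b2inf j)
      =O[atInfUHP] fun ρ : ℂ => ρ ^ ((1 : ℂ) / 2 + ν j) / ρ
  hb1inf0 : ∀ j, b1inf j ≠ 0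
  hb2inf0 : ∀ j, b2inf j ≠ 0
  hb10 : ∀ j, Tendsto (fun ρ : ℂ => b1 j ρ / ρ ^ ((1 : ℂ) / 2 - ν j)) nhdsZeroUHP
    (𝓝 (b10 j))
  hb20 : ∀ j, Tendsto (fun ρ : ℂ => b2 j ρ / ρ ^ ((1 : ℂ) / 2 - ν j)) nhdsZeroUHP
    (𝓝 (b20 j))

namespace GraphProblem

variable {p : ℕ}

/-- The characteristic function (3.5):
`Δ(ρ) = Σ_s (σ_{s1} b_{s1}(ρ) + σ_{s2} b_{s2}(ρ)) ∏_{j≠s} σ_j b_{j1}(ρ)`. -/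
def Delta (G : GraphProblem p) (ρ : ℂ) : ℂ :=
  ∑ s : Fin p, (G.σ1 s * G.b1 s ρ + G.σ2 s * G.b2 s ρ) *
    ∏ j ∈ Finset.univ.erase s, (G.σ j * G.b1 j ρ)

/-- `Δ_k(ρ) = σ_k² ∏_{j≠k} σ_j b_{j1}(ρ)` (formula (3.6)). -/
def Deltak (G : GraphProblem p) (k : Fin p) (ρ : ℂ) : ℂ :=
  (G.σ k) ^ 2 * ∏ j ∈ Finset.univ.erase k, (G.σ j * G.b1 j ρ)

/-- `d⁰ = Σ_s (σ_{s1} b⁰_{s1} + σ_{s2} b⁰_{s2}) ∏_{j≠s} σ_j b⁰_{j1}` (Lemma 3.1). -/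
def d0 (G : GraphProblem p) : ℂ :=
  ∑ s : Fin p, (G.σ1 s * G.b10 s + G.σ2 s * G.b20 s) *
    ∏ j ∈ Finset.univ.erase s, (G.σ j * G.b10 j)

open scoped Classical in
/-- `a^∞₁ = Σ_{s ∈ I₁} σ_{s2} b^∞_{s2} ∏_{j≠s} σ_j b^∞_{j1}`, where `I₁` is the group of
rays whose `ν_j` has the largest real part. -/
def aInf1 (G : GraphProblem p) : ℂ :=
  ∑ s : Fin p, if (∀ l, (G.ν l).re ≤ (G.ν s).re) then
    G.σ2 s * G.b2inf s * ∏ j ∈ Finset.univ.erase s, (G.σ j * G.b1inf j) else 0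

/-- Condition G: each `b_{k1}(ρ)Δ(ρ)` has no real zeros (except possibly `ρ = 0`) and no
multiple zeros. -/
def CondG (G : GraphProblem p) : Prop :=
  ∀ k : Fin p, (∀ ρ : ℝ, ρ ≠ 0 → G.b1 k ρ * G.Delta ρ ≠ 0) ∧
    ∀ ρ : ℂ, 0 < ρ.im → G.b1 k ρ * G.Delta ρ = 0 →
      deriv (fun z => G.b1 k z * G.Delta z) ρ ≠ 0

/-- Condition R₀: `b⁰_{j1} ≠ 0` for all `j`, and `d⁰ ≠ 0`. -/
def CondR0 (G : GraphProblem p) : Prop := (∀ j, G.b10 j ≠ 0) ∧ G.d0 ≠ 0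

/-- Condition R∞: `a^∞₁ ≠ 0`. -/
def CondRinf (G : GraphProblem p) : Prop := G.aInf1 ≠ 0

end GraphProblem

/-- The Weyl-type solutions `ψ_k = {ψ_{kj}}` of the graph problem, in the form (3.3):
`ψ_{kj} = γ_{kj} f_j` for `j ≠ k`, `ψ_{kk} = γ_{kk} f_k + (2iρ/b_{k1}) S_{k2}`, where the
coefficients `γ_{kj}, β_k` solve the linear system (3.4) and `γ_{kk}` is given by the
Cramer formula (3.6). -/
structure WeylData {p : ℕ} (G : GraphProblem p) where
  ψ : Fin p → Fin p → ℝ → ℂ → ℂ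
  γ : Fin p → Fin p → ℂ → ℂ
  β : Fin p → ℂ → ℂ
  hψj : ∀ k j, j ≠ k → ∀ (x : ℝ) (ρ : ℂ), ψ k j x ρ = γ k j ρ * G.f j x ρ
  hψk : ∀ k (x : ℝ) (ρ : ℂ),
    ψ k k x ρ = γ k k ρ * G.f k x ρ + (2 * Complex.I * ρ / G.b1 k ρ) * G.S2 k x (ρ ^ 2)
  hsys1 : ∀ k j (ρ : ℂ), ρ ≠ 0 → 0 ≤ ρ.im → G.b1 k ρ * G.Delta ρ ≠ 0 →
    G.σ j * G.b1 j ρ * γ k j ρ + β k ρ = 0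
  hsys2 : ∀ k (ρ : ℂ), ρ ≠ 0 → 0 ≤ ρ.im → G.b1 k ρ * G.Delta ρ ≠ 0 →
    ∑ j, (G.σ1 j * G.b1 j ρ + G.σ2 j * G.b2 j ρ) * γ k j ρ
      = - G.σ2 k * (2 * Complex.I * ρ / G.b1 k ρ)
  hγkk : ∀ k (ρ : ℂ),
    γ k k ρ = (2 * Complex.I * ρ / G.b1 k ρ) * (G.Deltak k ρ / G.Delta ρ)

/-- `h` has no analytic extension to a full neighbourhood of `ρ₀` (i.e. `ρ₀` is a
non-removable singularity). -/
def NotExtendable (h : ℂ → ℂ) (ρ₀ : ℂ) : Prop :=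
  ¬ ∃ g : ℂ → ℂ, AnalyticAt ℂ g ρ₀ ∧ ∀ᶠ ρ in 𝓝[≠] ρ₀, g ρ = h ρ

/-- `Z_k^+`: the set of poles of `ψ_{kk}(x,·)` in the open upper half-plane. -/
def ZplusSet {p : ℕ} {G : GraphProblem p} (W : WeylData G) (k : Fin p) : Set ℂ :=
  {ρ₀ : ℂ | 0 < ρ₀.im ∧ ∃ x : ℝ, 0 < x ∧ NotExtendable (fun ρ => W.ψ k k x ρ) ρ₀}

/-- The matrix `Ψ(x,ρ)` of (4.1): columns `(ψ_{kk}, ψ'_{kk})ᵀ` and `(f_k, f'_k)ᵀ` for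
`Im ρ > 0`, and `Ψ(x,ρ) := Ψ(x,−ρ)` for `Im ρ < 0`. -/
def PsiM {p : ℕ} {G : GraphProblem p} (W : WeylData G) (k : Fin p) (x : ℝ) (ρ : ℂ) :
    Matrix (Fin 2) (Fin 2) ℂ :=
  let ρ' := if 0 ≤ ρ.im then ρ else -ρ
  !![W.ψ k k x ρ', G.f k x ρ';
     deriv (fun t => W.ψ k k t ρ') x, deriv (fun t => G.f k t ρ') x]

/-- `μ₁ := Σ_{j=1}^p μ_{j1} = Σ_j (1/2 − ν_j)`. -/
def muSum {p : ℕ} (G : GraphProblem p) : ℂ := ∑ j : Fin p, ((1 : ℂ) / 2 - G.ν j)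

/-- `a^∞_ξ = Σ_{s∈I_ξ} σ_{s2} b^∞_{s2} ∏_{j≠s} σ_j b^∞_{j1}` (Lemma 3.1). -/
def aInfCoeff {p m : ℕ} (G : GraphProblem p) (I : Fin m → Finset (Fin p)) (ξ : Fin m) : ℂ :=
  ∑ s ∈ I ξ, G.σ2 s * G.b2inf s * ∏ j ∈ Finset.univ.erase s, (G.σ j * G.b1inf j)

theorem Finset.sum_eq_sum_sum_of_existsUnique_mem {ι κ M : Type*} [Fintype ι] [Fintype κ]
    [DecidableEq ι] [AddCommMonoid M] (I : κ → Finset ι) (hI : ∀ i, ∃! k, i ∈ I k)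
    (g : ι → M) : ∑ i, g i = ∑ k, ∑ i ∈ I k, g i := by
  rw [← Finset.sum_biUnion fun k _ k' _ hkk' =>
    Finset.disjoint_left.2 fun i hk hk' => hkk' ((hI i).unique hk hk')]
  congr
  ext i
  simpa using (hI i).exists

theorem Complex.cpow_finsetSum {ι : Type*} (s : Finset ι) {z : ℂ} (hz : z ≠ 0) (e : ι → ℂ) :
    z ^ (∑ i ∈ s, e i) = ∏ i ∈ s, z ^ e i := by
  classical
  induction s using Finset.induction_on with
  | empty => simp
  | insert a s ha ih => rw [Finset.sum_insert ha, cpow_add _ _ hz, ih, Finset.prod_insert ha]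

theorem Complex.mul_prod_erase_div_cpow_sum {ι : Type*} [Fintype ι] [DecidableEq ι] {z : ℂ}
    (hz : z ≠ 0) (e : ι → ℂ) (a : ℂ) (x : ι → ℂ) (s : ι) :
    (a * ∏ j ∈ Finset.univ.erase s, x j) / z ^ (∑ j, e j)
      = a / z ^ e s * ∏ j ∈ Finset.univ.erase s, x j / z ^ e j := by
  rw [← Finset.add_sum_erase _ _ (Finset.mem_univ s), cpow_add _ _ hz, cpow_finsetSum _ hz,
    Finset.prod_div_distrib, mul_div_mul_comm]

theorem Complex.cpow_add_eq_mul_cpow_sub {z : ℂ} (hz : z ≠ 0) (a b : ℂ) :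
    z ^ (a + b) = z ^ (2 * b) * z ^ (a - b) := by
  rw [← cpow_add _ _ hz]
  ring_nf

theorem Complex.isBigO_cpow_inv_cobounded {w : ℂ} (hw : w.re ≤ -1) :
    (fun z : ℂ => z ^ w) =O[Bornology.cobounded ℂ] fun z => z⁻¹ := by
  have hre : w.re ≠ 0 := by linarith
  refine (isTheta_cpow_const_rpow fun h => absurd h hre).isBigO.trans (IsBigO.of_bound 1 ?_)
  filter_upwards [eventually_cobounded_le_norm 1] with z hz
  rw [Real.norm_of_nonneg (by positivity), one_mul, norm_inv, ← Real.rpow_neg_one]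
  exact Real.rpow_le_rpow_of_exponent_le hz hw

theorem Complex.isBigO_inv_one_cobounded :
    (fun z : ℂ => z⁻¹) =O[Bornology.cobounded ℂ] fun _ => (1 : ℂ) :=
  tendsto_inv₀_cobounded.isBigO_one ℂ

namespace Asymptotics

variable {α 𝕜 : Type*} [NormedField 𝕜] {l : Filter α} {u : α → 𝕜}

theorem isBigO_one_of_isBigO_sub (hu : u =O[l] fun _ => (1 : 𝕜)) {f : α → 𝕜} {c : 𝕜}
    (h : (fun x => f x - c) =O[l] u) : f =O[l] fun _ => (1 : 𝕜) := by
  simpa using (h.trans hu).add (isBigO_const_const c one_ne_zero l)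

theorem isBigO_mul_sub_mul (hu : u =O[l] fun _ => (1 : 𝕜)) {f g : α → 𝕜} {a b : 𝕜}
    (hf : (fun x => f x - a) =O[l] u) (hg : (fun x => g x - b) =O[l] u) :
    (fun x => f x * g x - a * b) =O[l] u := by
  have hfg : (fun x => (f x - a) * g x) =O[l] u := by
    simpa using hf.mul (isBigO_one_of_isBigO_sub hu hg)
  refine (hfg.add (hg.const_mul_left a)).congr_left fun x => ?_
  ring

theorem isBigO_prod_sub_prod {ι : Type*} (hu : u =O[l] fun _ => (1 : 𝕜)) (s : Finset ι)
    {f : ι → α → 𝕜} {c : ι → 𝕜} (h : ∀ i ∈ s, (fun x => f i x - c i) =O[l] u) :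
    (fun x => ∏ i ∈ s, f i x - ∏ i ∈ s, c i) =O[l] u := by
  classical
  induction s using Finset.induction_on with
  | empty => simpa using isBigO_zero u l
  | insert a s ha ih =>
    simp only [Finset.prod_insert ha]
    exact isBigO_mul_sub_mul hu (h a (Finset.mem_insert_self a s))
      (ih fun i hi => h i (Finset.mem_insert_of_mem hi))

theorem isBigO_div_sub_of_isBigO_sub_mul {f g : α → 𝕜} {c : 𝕜} (hg : ∀ᶠ x in l, g x ≠ 0)
    (h : (fun x => f x - g x * c) =O[l] fun x => g x * u x) :
    (fun x => f x / g x - c) =O[l] u := by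
  refine (h.mul (isBigO_refl (fun x => (g x)⁻¹) l)).congr' ?_ ?_ <;>
    filter_upwards [hg] with x hx <;> field_simp

end Asymptotics

theorem atInfUHP_le_cobounded : atInfUHP ≤ Bornology.cobounded ℂ := inf_le_left

theorem eventually_ne_zero_atInfUHP : ∀ᶠ ρ : ℂ in atInfUHP, ρ ≠ 0 :=
  atInfUHP_le_cobounded (Bornology.eventually_ne_cobounded 0)

theorem eventually_ne_zero_nhdsZeroUHP : ∀ᶠ ρ : ℂ in nhdsZeroUHP, ρ ≠ 0 :=
  eventually_nhdsWithin_of_forall fun _ hρ => hρ.2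

namespace GraphProblem

variable {p : ℕ} (G : GraphProblem p)

def deltaTerm (s : Fin p) (ρ : ℂ) : ℂ :=
  (G.σ1 s * G.b1 s ρ + G.σ2 s * G.b2 s ρ) * ∏ j ∈ Finset.univ.erase s, (G.σ j * G.b1 j ρ)

def deltaTermCoeff (s : Fin p) : ℂ :=
  G.σ2 s * G.b2inf s * ∏ j ∈ Finset.univ.erase s, (G.σ j * G.b1inf j)

theorem Delta_eq_sum_deltaTerm (ρ : ℂ) : G.Delta ρ = ∑ s, G.deltaTerm s ρ := rfl

theorem aInfCoeff_eq_sum_deltaTermCoeff {m : ℕ} (I : Fin m → Finset (Fin p)) (ξ : Fin m) :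
    aInfCoeff G I ξ = ∑ s ∈ I ξ, G.deltaTermCoeff s := rfl

theorem isBigO_b1_div_cpow_sub (j : Fin p) :
    (fun ρ : ℂ => G.b1 j ρ / ρ ^ ((1 : ℂ) / 2 - G.ν j) - G.b1inf j)
      =O[atInfUHP] fun ρ => ρ⁻¹ := by
  refine isBigO_div_sub_of_isBigO_sub_mul ?_ ?_
  · filter_upwards [eventually_ne_zero_atInfUHP] with ρ hρ
    exact cpow_ne_zero_iff.2 (Or.inl hρ)
  · simpa only [div_eq_mul_inv, mul_comm _ (G.b1inf j)] using G.hb1inf j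

theorem isBigO_b2_div_cpow_sub (j : Fin p) :
    (fun ρ : ℂ => G.b2 j ρ / ρ ^ ((1 : ℂ) / 2 + G.ν j) - G.b2inf j)
      =O[atInfUHP] fun ρ => ρ⁻¹ := by
  refine isBigO_div_sub_of_isBigO_sub_mul ?_ ?_
  · filter_upwards [eventually_ne_zero_atInfUHP] with ρ hρ
    exact cpow_ne_zero_iff.2 (Or.inl hρ)
  · simpa only [div_eq_mul_inv, mul_comm _ (G.b2inf j)] using G.hb2inf j

theorem deltaTerm_div_cpow_eq {ρ : ℂ} (hρ : ρ ≠ 0) (s : Fin p) :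
    G.deltaTerm s ρ / ρ ^ (muSum G + 2 * G.ν s)
      = (G.σ1 s * G.b1 s ρ + G.σ2 s * G.b2 s ρ) / ρ ^ ((1 : ℂ) / 2 + G.ν s)
        * ∏ j ∈ Finset.univ.erase s, G.σ j * G.b1 j ρ / ρ ^ ((1 : ℂ) / 2 - G.ν j) := by
  rw [cpow_add _ _ hρ, ← div_div, deltaTerm, muSum, mul_prod_erase_div_cpow_sum hρ,
    cpow_add_eq_mul_cpow_sub hρ]
  ring

theorem isBigO_σ1_b1_add_σ2_b2_div_cpow_sub (s : Fin p) :
    (fun ρ : ℂ => (G.σ1 s * G.b1 s ρ + G.σ2 s * G.b2 s ρ) / ρ ^ ((1 : ℂ) / 2 + G.ν s)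
      - G.σ2 s * G.b2inf s) =O[atInfUHP] fun ρ => ρ⁻¹ := by
  have hdecay : (fun ρ : ℂ => ρ ^ (-(2 * G.ν s))) =O[atInfUHP] fun ρ => ρ⁻¹ := by
    refine (isBigO_cpow_inv_cobounded ?_).mono atInfUHP_le_cobounded
    have := G.hν s
    simp only [neg_re, mul_re, re_ofNat, im_ofNat, zero_mul, sub_zero]
    linarith
  have hb1 : (fun ρ : ℂ => G.b1 s ρ / ρ ^ ((1 : ℂ) / 2 - G.ν s)) =O[atInfUHP] fun _ => (1 : ℂ) :=
    isBigO_one_of_isBigO_sub (isBigO_inv_one_cobounded.mono atInfUHP_le_cobounded)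
      (G.isBigO_b1_div_cpow_sub s)
  have hsub : (fun ρ : ℂ => ρ ^ (-(2 * G.ν s)) * (G.b1 s ρ / ρ ^ ((1 : ℂ) / 2 - G.ν s)))
      =O[atInfUHP] fun ρ => ρ⁻¹ := by
    simpa using hdecay.mul hb1
  refine ((hsub.const_mul_left (G.σ1 s)).add
    ((G.isBigO_b2_div_cpow_sub s).const_mul_left (G.σ2 s))).congr' ?_ .rfl
  filter_upwards [eventually_ne_zero_atInfUHP] with ρ hρ
  rw [cpow_neg, cpow_add_eq_mul_cpow_sub hρ]
  ring

theorem isBigO_deltaTerm_div_cpow_sub (s : Fin p) :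
    (fun ρ : ℂ => G.deltaTerm s ρ / ρ ^ (muSum G + 2 * G.ν s) - G.deltaTermCoeff s)
      =O[atInfUHP] fun ρ => ρ⁻¹ := by
  have hu := isBigO_inv_one_cobounded.mono atInfUHP_le_cobounded
  have hprod : (fun ρ : ℂ =>
      ∏ j ∈ Finset.univ.erase s, G.σ j * G.b1 j ρ / ρ ^ ((1 : ℂ) / 2 - G.ν j)
      - ∏ j ∈ Finset.univ.erase s, G.σ j * G.b1inf j) =O[atInfUHP] fun ρ => ρ⁻¹ :=
    isBigO_prod_sub_prod hu _ fun j _ =>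
      ((G.isBigO_b1_div_cpow_sub j).const_mul_left (G.σ j)).congr_left fun ρ => by ring
  refine (isBigO_mul_sub_mul hu (G.isBigO_σ1_b1_add_σ2_b2_div_cpow_sub s) hprod).congr' ?_ .rfl
  filter_upwards [eventually_ne_zero_atInfUHP] with ρ hρ
  rw [G.deltaTerm_div_cpow_eq hρ, deltaTermCoeff]

theorem tendsto_Delta_div_cpow_muSum :
    Tendsto (fun ρ => G.Delta ρ / ρ ^ muSum G) nhdsZeroUHP (𝓝 G.d0) := by
  have hterm : ∀ s, Tendsto (fun ρ : ℂ => (G.σ1 s * G.b1 s ρ + G.σ2 s * G.b2 s ρ)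
      / ρ ^ ((1 : ℂ) / 2 - G.ν s)) nhdsZeroUHP (𝓝 (G.σ1 s * G.b10 s + G.σ2 s * G.b20 s)) :=
    fun s => (((G.hb10 s).const_mul (G.σ1 s)).add ((G.hb20 s).const_mul (G.σ2 s))).congr
      fun ρ => by rw [add_div, mul_div_assoc, mul_div_assoc]
  have hfactor : ∀ j, Tendsto (fun ρ : ℂ => G.σ j * G.b1 j ρ / ρ ^ ((1 : ℂ) / 2 - G.ν j))
      nhdsZeroUHP (𝓝 (G.σ j * G.b10 j)) :=
    fun j => ((G.hb10 j).const_mul (G.σ j)).congr fun ρ => (mul_div_assoc _ _ _).symm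
  have hlim := tendsto_finsetSum Finset.univ fun s _ =>
    (hterm s).mul (tendsto_finsetProd (Finset.univ.erase s) fun j _ => hfactor j)
  refine hlim.congr' ?_
  filter_upwards [eventually_ne_zero_nhdsZeroUHP] with ρ hρ
  rw [Delta_eq_sum_deltaTerm, muSum, Finset.sum_div]
  refine Finset.sum_congr rfl fun s _ => ?_
  rw [deltaTerm, mul_prod_erase_div_cpow_sum hρ]

end GraphProblem

theorem stmt6_general (p m : ℕ) (G : GraphProblem p)
    (I : Fin m → Finset (Fin p)) (τ : Fin m → ℂ)
    (hcover : ∀ j : Fin p, ∃! ξ : Fin m, j ∈ I ξ)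
    (hτ : ∀ ξ, ∀ j ∈ I ξ, G.ν j = τ ξ)
    -- the Lemma 2.1 constants `b^∞` are universal functions of `ν` alone
    (B1 B2 : ℂ → ℂ)
    (hB : ∀ j, G.b1inf j = B1 (G.ν j) ∧ G.b2inf j = B2 (G.ν j)) :
    (∃ E : Fin m → ℂ → ℂ,
      (∀ ξ, (E ξ) =O[atInfUHP] fun ρ : ℂ => ρ⁻¹) ∧
      ∀ ρ : ℂ, ρ ≠ 0 → 0 ≤ ρ.im →
        G.Delta ρ = ∑ ξ : Fin m, ρ ^ (muSum G + 2 * τ ξ) * (aInfCoeff G I ξ + E ξ ρ)) ∧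
    Tendsto (fun ρ : ℂ => G.Delta ρ / ρ ^ (muSum G)) nhdsZeroUHP (𝓝 G.d0) ∧
    (∀ G' : GraphProblem p, G'.ν = G.ν → G'.σ = G.σ → G'.σ1 = G.σ1 → G'.σ2 = G.σ2 →
      (∀ j, G'.b1inf j = B1 (G'.ν j) ∧ G'.b2inf j = B2 (G'.ν j)) →
      ∀ ξ, aInfCoeff G' I ξ = aInfCoeff G I ξ) := by
  refine ⟨⟨fun ξ ρ => ∑ s ∈ I ξ,
      (G.deltaTerm s ρ / ρ ^ (muSum G + 2 * G.ν s) - G.deltaTermCoeff s),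
    fun ξ => IsBigO.fun_sum fun s _ => G.isBigO_deltaTerm_div_cpow_sub s,
    fun ρ hρ _ => ?_⟩, G.tendsto_Delta_div_cpow_muSum, fun G' hν hσ _ hσ2 hB' ξ => ?_⟩
  · rw [G.Delta_eq_sum_deltaTerm, Finset.sum_eq_sum_sum_of_existsUnique_mem I hcover]
    refine Finset.sum_congr rfl fun ξ _ => ?_
    rw [G.aInfCoeff_eq_sum_deltaTermCoeff, ← Finset.sum_add_distrib, Finset.mul_sum]
    refine Finset.sum_congr rfl fun s hs => ?_
    rw [← hτ ξ s hs, add_sub_cancel, mul_div_cancel₀ _ (cpow_ne_zero_iff.2 (Or.inl hρ))]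
  · have hb1 : G'.b1inf = G.b1inf := funext fun j => by rw [(hB' j).1, hν, (hB j).1]
    have hb2 : G'.b2inf = G.b2inf := funext fun j => by rw [(hB' j).2, hν, (hB j).2]
    simp only [aInfCoeff, hσ, hσ2, hb1, hb2]

/-- Lemma 3.1: as `ρ → ∞`,
`Δ(ρ) = Σ_{ξ=1}^m ρ^{μ₁+2τ_ξ}(a^∞_ξ + O(ρ^{−1}))`; as `ρ → 0`, `Δ(ρ) = ρ^{μ₁}(d⁰ + o(1))`.
Moreover the coefficients `a^∞_ξ` depend only on the numbers `ν_k` and the coefficients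
`σ_k, σ_{k1}, σ_{k2}`, and not on the potentials `q_k`. -/
theorem stmt6 (p m : ℕ) (G : GraphProblem p)
    (I : Fin m → Finset (Fin p)) (τ : Fin m → ℂ)
    (hcover : ∀ j : Fin p, ∃! ξ : Fin m, j ∈ I ξ)
    (hne : ∀ ξ, (I ξ).Nonempty)
    (hτ : ∀ ξ, ∀ j ∈ I ξ, G.ν j = τ ξ)
    (hmono : ∀ ξ η : Fin m, ξ < η → (τ η).re < (τ ξ).re)
    -- the Lemma 2.1 constants `b^∞` are universal functions of `ν` alone
    (B1 B2 : ℂ → ℂ)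
    (hB : ∀ j, G.b1inf j = B1 (G.ν j) ∧ G.b2inf j = B2 (G.ν j)) :
    (∃ E : Fin m → ℂ → ℂ,
      (∀ ξ, (E ξ) =O[atInfUHP] fun ρ : ℂ => ρ⁻¹) ∧
      ∀ ρ : ℂ, ρ ≠ 0 → 0 ≤ ρ.im →
        G.Delta ρ = ∑ ξ : Fin m, ρ ^ (muSum G + 2 * τ ξ) * (aInfCoeff G I ξ + E ξ ρ)) ∧
    Tendsto (fun ρ : ℂ => G.Delta ρ / ρ ^ (muSum G)) nhdsZeroUHP (𝓝 G.d0) ∧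
    (∀ G' : GraphProblem p, G'.ν = G.ν → G'.σ = G.σ → G'.σ1 = G.σ1 → G'.σ2 = G.σ2 →
      (∀ j, G'.b1inf j = B1 (G'.ν j) ∧ G'.b2inf j = B2 (G'.ν j)) →
      ∀ ξ, aInfCoeff G' I ξ = aInfCoeff G I ξ) :=
  stmt6_general p m G I τ hcover hτ B1 B2 hB
end
end

section
/- For every ρ for which the Weyl-type solutions exist, the local Weyl functions satisfy the identity (σ_{p1} + σ_{p2}m_p(λ))/σ_p = −Σ_{j=2}^{p−1} (σ_{j1} + σ_{j2}m_j(λ))/σ_j − U_{12}(ψ_{11}(·,ρ))/U_{11}(ψ_{11}(·,ρ)), where λ = ρ² and m_j(λ) = b_{j2}(ρ)/b_{j1}(ρ); in particular, the Weyl function m_p of the ray R_p is determined by q_2, …, q_{p−1}, the component ψ_{11} of the Weyl-type solution ψ_1, and the matching coefficients. -/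
open Filter Complex Topology MeasureTheory Asymptotics Matrix

noncomputable section

/-!
Write `T_j = (σ_{j1} + σ_{j2} m_j)/σ_j`. The first equations of the system (3.4) give
`γ_{1j} = -β_1/(σ_j b_{j1})`, and substituting this into its last equation gives
`Σ_j T_j = σ_{12} (2iρ/b_{11}) / β_1`. On the other hand `f_1 = b_{11} S_{11} + b_{12} S_{12}`
and `⟨S_{11}, S_{12}⟩ = 1` give `⟨f_1, S_{12}⟩ = b_{11}`, `⟨S_{11}, f_1⟩ = b_{12}`, so from
`ψ_{11} = γ_{11} f_1 + (2iρ/b_{11}) S_{12}` one reads off `U_{11}(ψ_{11}) = -β_1` and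
`U_{12}(ψ_{11}) = -β_1 T_1 + σ_{12} (2iρ/b_{11})`. Solving the sum for `T_p` is the identity.
-/

theorem Finset.sum_eq_add_add_sum_filter_ne {ι M : Type*} [Fintype ι] [DecidableEq ι]
    [AddCommMonoid M] {a b : ι} (hab : a ≠ b) (f : ι → M) :
    ∑ i, f i = f a + f b + ∑ i ∈ Finset.univ.filter (fun i => i ≠ a ∧ i ≠ b), f i := by
  have hfilter :
      Finset.univ.filter (fun i => i ≠ a ∧ i ≠ b) = (Finset.univ.erase a).erase b := by
    ext i
    simp [and_comm]
  rw [hfilter, ← Finset.add_sum_erase _ _ (Finset.mem_univ a),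
    ← Finset.add_sum_erase _ _ (Finset.mem_erase.2 ⟨hab.symm, Finset.mem_univ b⟩), add_assoc]

section Wronskian

variable {u v w : ℝ → ℂ} {x : ℝ}

theorem Wr_self (u : ℝ → ℂ) (x : ℝ) : Wr u u x = 0 := by
  unfold Wr
  ring

theorem Wr_congr_left (h : u =ᶠ[𝓝 x] v) : Wr u w x = Wr v w x := by
  simp only [Wr, h.eq_of_nhds, h.deriv_eq]

theorem Wr_congr_right (h : v =ᶠ[𝓝 x] w) : Wr u v x = Wr u w x := by
  simp only [Wr, h.eq_of_nhds, h.deriv_eq]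

theorem Wr_linear_left (a b : ℂ) (hu : DifferentiableAt ℝ u x) (hv : DifferentiableAt ℝ v x) :
    Wr (fun t => a * u t + b * v t) w x = a * Wr u w x + b * Wr v w x := by
  simp only [Wr, deriv_fun_add (hu.const_mul a) (hv.const_mul b), deriv_const_mul _ hu,
    deriv_const_mul _ hv]
  ring

theorem Wr_linear_right (a b : ℂ) (hv : DifferentiableAt ℝ v x)
    (hw : DifferentiableAt ℝ w x) :
    Wr u (fun t => a * v t + b * w t) x = a * Wr u v x + b * Wr u w x := by
  simp only [Wr, deriv_fun_add (hv.const_mul a) (hw.const_mul b), deriv_const_mul _ hv,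
    deriv_const_mul _ hw]
  ring

end Wronskian

namespace GraphProblem

variable {p : ℕ} (G : GraphProblem p)

def U1 (j : Fin p) (lam : ℂ) (y : ℝ → ℂ) (x : ℝ) : ℂ :=
  G.σ j * Wr y (fun t => G.S2 j t lam) x

def U2 (j : Fin p) (lam : ℂ) (y : ℝ → ℂ) (x : ℝ) : ℂ :=
  G.σ1 j * Wr y (fun t => G.S2 j t lam) x + G.σ2 j * Wr (fun t => G.S1 j t lam) y x

/-- `T_j`; it equals `U_{j2}(f_j)/U_{j1}(f_j)`. -/
def weylTerm (j : Fin p) (ρ : ℂ) : ℂ :=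
  (G.σ1 j + G.σ2 j * (G.b2 j ρ / G.b1 j ρ)) / G.σ j

variable {G} {j : Fin p} {ρ : ℂ} {x : ℝ}

theorem f_eventuallyEq (hρ0 : ρ ≠ 0) (him : 0 ≤ ρ.im) (hx : 0 < x) :
    (fun t => G.f j t ρ) =ᶠ[𝓝 x]
      fun t => G.b1 j ρ * G.S1 j t (ρ ^ 2) + G.b2 j ρ * G.S2 j t (ρ ^ 2) := by
  filter_upwards [isOpen_Ioi.mem_nhds hx] with t ht
  exact G.hb j ρ hρ0 him t ht

theorem differentiableAt_S1 (hρ0 : ρ ≠ 0) (him : 0 ≤ ρ.im) (hx : 0 < x)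
    (hb1 : G.b1 j ρ ≠ 0)
    (hf : DifferentiableAt ℝ (fun t => G.f j t ρ) x)
    (hS2 : DifferentiableAt ℝ (fun t => G.S2 j t (ρ ^ 2)) x) :
    DifferentiableAt ℝ (fun t => G.S1 j t (ρ ^ 2)) x := by
  have hS1 : (fun t => (G.f j t ρ - G.b2 j ρ * G.S2 j t (ρ ^ 2)) / G.b1 j ρ) =ᶠ[𝓝 x]
      fun t => G.S1 j t (ρ ^ 2) := by
    filter_upwards [f_eventuallyEq hρ0 him hx] with t ht
    rw [ht]
    field_simp
    ring
  exact ((hf.sub (hS2.const_mul _)).div_const _).congr_of_eventuallyEq hS1.symm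

theorem Wr_f_S2 (hρ0 : ρ ≠ 0) (him : 0 ≤ ρ.im) (hx : 0 < x)
    (hS1 : DifferentiableAt ℝ (fun t => G.S1 j t (ρ ^ 2)) x)
    (hS2 : DifferentiableAt ℝ (fun t => G.S2 j t (ρ ^ 2)) x) :
    Wr (fun t => G.f j t ρ) (fun t => G.S2 j t (ρ ^ 2)) x = G.b1 j ρ := by
  rw [Wr_congr_left (f_eventuallyEq hρ0 him hx), Wr_linear_left _ _ hS1 hS2,
    G.hWrS j _ x hx, Wr_self]
  ring

theorem Wr_S1_f (hρ0 : ρ ≠ 0) (him : 0 ≤ ρ.im) (hx : 0 < x)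
    (hS1 : DifferentiableAt ℝ (fun t => G.S1 j t (ρ ^ 2)) x)
    (hS2 : DifferentiableAt ℝ (fun t => G.S2 j t (ρ ^ 2)) x) :
    Wr (fun t => G.S1 j t (ρ ^ 2)) (fun t => G.f j t ρ) x = G.b2 j ρ := by
  rw [Wr_congr_right (f_eventuallyEq hρ0 him hx), Wr_linear_right _ _ hS1 hS2,
    G.hWrS j _ x hx, Wr_self]
  ring

end GraphProblem

namespace WeylData

variable {p : ℕ} {G : GraphProblem p} (W : WeylData G) {k : Fin p} {ρ : ℂ} {x : ℝ}

theorem γ_eq_neg_β_div (hρ0 : ρ ≠ 0) (him : 0 ≤ ρ.im) (hne : G.b1 k ρ * G.Delta ρ ≠ 0)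
    {j : Fin p} (hb1 : G.b1 j ρ ≠ 0) : W.γ k j ρ = -W.β k ρ / (G.σ j * G.b1 j ρ) := by
  rw [eq_div_iff (mul_ne_zero (G.hσ j) hb1)]
  linear_combination W.hsys1 k j ρ hρ0 him hne

theorem sum_weylTerm (hρ0 : ρ ≠ 0) (him : 0 ≤ ρ.im) (hne : G.b1 k ρ * G.Delta ρ ≠ 0)
    (hb1 : ∀ j, G.b1 j ρ ≠ 0) (hβ : W.β k ρ ≠ 0) :
    ∑ j, G.weylTerm j ρ = G.σ2 k * (2 * I * ρ / G.b1 k ρ) / W.β k ρ := by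
  have hterm : ∀ j, G.weylTerm j ρ
      = (G.σ1 j * G.b1 j ρ + G.σ2 j * G.b2 j ρ) * W.γ k j ρ * (-1 / W.β k ρ) := by
    intro j
    rw [W.γ_eq_neg_β_div hρ0 him hne (hb1 j), GraphProblem.weylTerm]
    field_simp [G.hσ j, hb1 j]
  rw [Finset.sum_congr rfl fun j _ => hterm j, ← Finset.sum_mul, W.hsys2 k ρ hρ0 him hne]
  ring

theorem ψ_self_eq : (fun t => W.ψ k k t ρ) = fun t =>
    W.γ k k ρ * G.f k t ρ + 2 * I * ρ / G.b1 k ρ * G.S2 k t (ρ ^ 2) :=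
  funext fun t => W.hψk k t ρ

theorem U1_ψ_self_eq (hρ0 : ρ ≠ 0) (him : 0 ≤ ρ.im) (hne : G.b1 k ρ * G.Delta ρ ≠ 0)
    (hx : 0 < x)
    (hf : DifferentiableAt ℝ (fun t => G.f k t ρ) x)
    (hS1 : DifferentiableAt ℝ (fun t => G.S1 k t (ρ ^ 2)) x)
    (hS2 : DifferentiableAt ℝ (fun t => G.S2 k t (ρ ^ 2)) x) :
    G.U1 k (ρ ^ 2) (fun t => W.ψ k k t ρ) x = -W.β k ρ := by
  rw [GraphProblem.U1, ψ_self_eq, Wr_linear_left _ _ hf hS2, G.Wr_f_S2 hρ0 him hx hS1 hS2,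
    Wr_self]
  linear_combination W.hsys1 k k ρ hρ0 him hne

theorem U2_ψ_self_eq (hρ0 : ρ ≠ 0) (him : 0 ≤ ρ.im) (hne : G.b1 k ρ * G.Delta ρ ≠ 0)
    (hx : 0 < x)
    (hf : DifferentiableAt ℝ (fun t => G.f k t ρ) x)
    (hS1 : DifferentiableAt ℝ (fun t => G.S1 k t (ρ ^ 2)) x)
    (hS2 : DifferentiableAt ℝ (fun t => G.S2 k t (ρ ^ 2)) x) :
    G.U2 k (ρ ^ 2) (fun t => W.ψ k k t ρ) x
      = -W.β k ρ * G.weylTerm k ρ + G.σ2 k * (2 * I * ρ / G.b1 k ρ) := by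
  have hb1 : G.b1 k ρ ≠ 0 := left_ne_zero_of_mul hne
  rw [GraphProblem.U2, ψ_self_eq, Wr_linear_left _ _ hf hS2, Wr_linear_right _ _ hf hS2,
    G.Wr_f_S2 hρ0 him hx hS1 hS2, G.Wr_S1_f hρ0 him hx hS1 hS2, Wr_self, G.hWrS k _ x hx,
    W.γ_eq_neg_β_div hρ0 him hne hb1, GraphProblem.weylTerm]
  field_simp [G.hσ k]
  ring

end WeylData

theorem stmt19_general (p : ℕ) (hp : 2 ≤ p) (G : GraphProblem p) (W : WeylData G)
    (k1 kp : Fin p) (hk1 : (k1 : ℕ) = 0) (hkp : (kp : ℕ) = p - 1)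
    (ρ : ℂ) (hρ0 : ρ ≠ 0) (him : 0 ≤ ρ.im)
    (hne : G.b1 k1 ρ * G.Delta ρ ≠ 0)
    (hb1ne : ∀ j, G.b1 j ρ ≠ 0)
    (hβ : W.β k1 ρ ≠ 0)
    (hdiff : ∀ x : ℝ, 0 < x →
      DifferentiableAt ℝ (fun t : ℝ => G.f k1 t ρ) x ∧
      DifferentiableAt ℝ (fun t : ℝ => G.S2 k1 t (ρ ^ 2)) x) :
    ∀ x : ℝ, 0 < x →
      (G.σ1 kp + G.σ2 kp * (G.b2 kp ρ / G.b1 kp ρ)) / G.σ kp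
        = - (∑ j ∈ Finset.univ.filter (fun j : Fin p => j ≠ k1 ∧ j ≠ kp),
              (G.σ1 j + G.σ2 j * (G.b2 j ρ / G.b1 j ρ)) / G.σ j)
          - (G.σ1 k1 * Wr (fun t => W.ψ k1 k1 t ρ) (fun t => G.S2 k1 t (ρ ^ 2)) x
              + G.σ2 k1 * Wr (fun t => G.S1 k1 t (ρ ^ 2)) (fun t => W.ψ k1 k1 t ρ) x)
            / (G.σ k1 * Wr (fun t => W.ψ k1 k1 t ρ) (fun t => G.S2 k1 t (ρ ^ 2)) x) := by
  intro x hx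
  obtain ⟨hf, hS2⟩ := hdiff x hx
  have hS1 := G.differentiableAt_S1 hρ0 him hx (hb1ne k1) hf hS2
  have hk1p : k1 ≠ kp := fun h => by have := congrArg Fin.val h; omega
  have hsum := W.sum_weylTerm hρ0 him hne hb1ne hβ
  rw [Finset.sum_eq_add_add_sum_filter_ne hk1p, eq_div_iff hβ] at hsum
  change G.weylTerm kp ρ = -(∑ j ∈ _, G.weylTerm j ρ)
    - G.U2 k1 (ρ ^ 2) (fun t => W.ψ k1 k1 t ρ) x / G.U1 k1 (ρ ^ 2) (fun t => W.ψ k1 k1 t ρ) x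
  rw [W.U1_ψ_self_eq hρ0 him hne hx hf hS1 hS2, W.U2_ψ_self_eq hρ0 him hne hx hf hS1 hS2]
  field_simp
  linear_combination hsum

/-- the identity (5.2): for every `ρ` for which the Weyl-type solutions
exist, `(σ_{p1} + σ_{p2}m_p(λ))/σ_p = −Σ_{j=2}^{p−1}(σ_{j1} + σ_{j2}m_j(λ))/σ_j −
U_{12}(ψ_{11}(·,ρ))/U_{11}(ψ_{11}(·,ρ))`, where `λ = ρ²` and `m_j(λ) = b_{j2}(ρ)/b_{j1}(ρ)`
are the local Weyl functions; in particular the Weyl function `m_p` of the ray `R_p` is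
determined by `q_2, …, q_{p−1}`, the component `ψ_{11}` of `ψ_1`, and the matching
coefficients. Here ray `1` is indexed by `k1` and ray `p` by `kp`. -/
theorem stmt19 (p : ℕ) (hp : 2 ≤ p) (G : GraphProblem p) (W : WeylData G)
    (hG : G.CondG) (hR0 : G.CondR0) (hRinf : G.CondRinf)
    (k1 kp : Fin p) (hk1 : (k1 : ℕ) = 0) (hkp : (kp : ℕ) = p - 1)
    (ρ : ℂ) (hρ0 : ρ ≠ 0) (him : 0 ≤ ρ.im)
    (hne : G.b1 k1 ρ * G.Delta ρ ≠ 0)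
    (hb1ne : ∀ j, G.b1 j ρ ≠ 0)
    (hβ : W.β k1 ρ ≠ 0)
    (hγne : ∀ j : Fin p, j ≠ k1 → W.γ k1 j ρ ≠ 0)
    (hdiff : ∀ x : ℝ, 0 < x →
      DifferentiableAt ℝ (fun t : ℝ => G.f k1 t ρ) x ∧
      DifferentiableAt ℝ (fun t : ℝ => G.S2 k1 t (ρ ^ 2)) x) :
    ∀ x : ℝ, 0 < x →
      (G.σ1 kp + G.σ2 kp * (G.b2 kp ρ / G.b1 kp ρ)) / G.σ kp
        = - (∑ j ∈ Finset.univ.filter (fun j : Fin p => j ≠ k1 ∧ j ≠ kp),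
              (G.σ1 j + G.σ2 j * (G.b2 j ρ / G.b1 j ρ)) / G.σ j)
          - (G.σ1 k1 * Wr (fun t => W.ψ k1 k1 t ρ) (fun t => G.S2 k1 t (ρ ^ 2)) x
              + G.σ2 k1 * Wr (fun t => G.S1 k1 t (ρ ^ 2)) (fun t => W.ψ k1 k1 t ρ) x)
            / (G.σ k1 * Wr (fun t => W.ψ k1 k1 t ρ) (fun t => G.S2 k1 t (ρ ^ 2)) x) :=
  stmt19_general p hp G W k1 kp hk1 hkp ρ hρ0 him hne hb1ne hβ hdiff
end
end
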